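/- arXiv:1908.10284 — 2 statements merged into one kernel-verified Lean document; each statement's English description precedes it below -/
import Mathlib

section
/- Additive empirical-cost bound: let Φ_n be an n-tuple of points in ℝ^d (columns of a d×n matrix), Π_m the orthogonal projection onto a subspace satisfying Π - Π_m ⪯ (γ/(1-ε)) (Φ_nΦ_nᵀ + γΠ)⁻¹ where Π is the orthogonal projection onto the span of the columns of Φ_n (and the inverse taken on that span). Let S_n be an orthogonal projection matrix with trace k achieving the optimal exact k-means cost W* = ‖Φ_n - Φ_n S_n‖_F². Then the optimal cost over centroids constrained to Range(Π_m), namely min over trace-k cluster projections S of ‖Φ_n - Π_m Φ_n S‖_F², is at most W* + γk/(1-ε). -/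
open Matrix

/-! The dictionary condition conjugated by `Φ` gives `Φᵀ(Π - Π_m)Φ ⪯ c · ΦᵀJΦ` with
`c = γ/(1-ε)`, and `ΦᵀJΦ ⪯ 1` because `JΦΦᵀJ = J - γJ²` makes
`1 - ΦᵀJΦ = (1 - ΦᵀJΦ)ᵀ(1 - ΦᵀJΦ) + γ(JΦ)ᵀ(JΦ)`. Since `ΠΦ = Φ`, this is `Φᵀ(1 - Π_m)Φ ⪯ c · 1`.
For the cluster projection `S` of any clustering, Pythagoras gives
`‖Φ - Π_mΦS‖² = ‖Φ - ΦS‖² + Tr(Φᵀ(1 - Π_m)ΦS)`, and the trace is at most `c · Tr S = c k`. -/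

/-- The cluster projection matrix `S = F R⁻¹ Fᵀ` of the partition induced by the cluster
assignment `g`: its `(i,i')` entry is `1/|C_{g i}|` if `g i = g i'` and `0` otherwise. -/
noncomputable def clusterProj {n k : ℕ} (g : Fin n → Fin k) : Matrix (Fin n) (Fin n) ℝ :=
  fun i i' => if g i = g i' then
    (1 : ℝ) / ((Finset.univ.filter (fun s => g s = g i)).card) else 0

/-- Squared Frobenius norm `‖A‖_F² = Tr(AᵀA)`. -/
noncomputable def frobSq {d n : ℕ} (A : Matrix (Fin d) (Fin n) ℝ) : ℝ := (Aᵀ * A).trace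

lemma IsIdempotentElem.mul_eq_self_of_mul_mul_eq {R : Type*} [Semigroup R] {p x : R}
    (hp : IsIdempotentElem p) (h : p * x * p = x) : p * x = x ∧ x * p = x := by
  constructor
  · rw [← h, ← mul_assoc, ← mul_assoc, hp.eq]
  · conv_lhs => rw [← h]
    rw [mul_assoc, hp.eq, h]

namespace Matrix

variable {m n : Type*} [Fintype m] [Fintype n]

lemma posSemidef_transpose_mul_self (A : Matrix m n ℝ) : (Aᵀ * A).PosSemidef := by
  simpa using posSemidef_conjTranspose_mul_self A

lemma PosSemidef.transpose_mul_mul_same {M : Matrix m m ℝ} (hM : M.PosSemidef)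
    (B : Matrix m n ℝ) : (Bᵀ * M * B).PosSemidef := by
  simpa using hM.conjTranspose_mul_mul_same B

lemma mul_eq_self_of_mul_mul_transpose_eq [DecidableEq m] {Q : Matrix m m ℝ} {Φ : Matrix m n ℝ}
    (h : Q * (Φ * Φᵀ) = Φ * Φᵀ) : Q * Φ = Φ := by
  have h0 : (Q - 1) * (Φ * Φᴴ) = 0 := by
    rw [conjTranspose_eq_transpose_of_trivial, Matrix.sub_mul, h, Matrix.one_mul, sub_self]
  rw [← sub_eq_zero, ← (mul_self_mul_conjTranspose_eq_zero Φ (Q - 1)).1 h0, Matrix.sub_mul,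
    Matrix.one_mul]

lemma transpose_eq_of_mul_eq_of_mul_eq_self {G Proj J : Matrix m m ℝ} (hGT : Gᵀ = G)
    (hProjT : Projᵀ = Proj) (hJG : J * G = Proj) (hJProj : J * Proj = J) : Jᵀ = J :=
  calc Jᵀ = (J * G) * Jᵀ := by rw [hJG, ← hProjT, ← transpose_mul, hJProj]
    _ = J * (J * G)ᵀ := by rw [transpose_mul, hGT, Matrix.mul_assoc]
    _ = J := by rw [hJG, hProjT, hJProj]

lemma mul_mul_eq_sub_smul_mul_self {G Proj J : Matrix m m ℝ} {γ : ℝ}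
    (hJG : J * (G + γ • Proj) = Proj) (hProjJ : Proj * J = J) (hJProj : J * Proj = J) :
    J * G * J = J - γ • (J * J) := by
  rw [Matrix.mul_add, Matrix.mul_smul, hJProj, ← eq_sub_iff_add_eq] at hJG
  rw [hJG, Matrix.sub_mul, hProjJ, Matrix.smul_mul]

variable [DecidableEq n]

lemma posSemidef_one_sub_transpose_mul_mul (Φ : Matrix m n ℝ) {J : Matrix m m ℝ} {γ : ℝ}
    (hγ : 0 ≤ γ) (hJT : Jᵀ = J) (hJ : J * (Φ * Φᵀ) * J = J - γ • (J * J)) :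
    (1 - Φᵀ * J * Φ).PosSemidef := by
  set A := Φᵀ * J * Φ
  have hAT : Aᵀ = A := by simp only [A, transpose_mul, transpose_transpose, hJT, Matrix.mul_assoc]
  have hAA : A * A = A - γ • ((J * Φ)ᵀ * (J * Φ)) :=
    calc A * A = Φᵀ * (J * (Φ * Φᵀ) * J) * Φ := by simp only [A, Matrix.mul_assoc]
      _ = A - γ • ((J * Φ)ᵀ * (J * Φ)) := by
        rw [hJ, transpose_mul, hJT]
        simp only [A, Matrix.mul_sub, Matrix.sub_mul, Matrix.mul_smul, Matrix.smul_mul,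
          Matrix.mul_assoc]
  have hsq : 1 - A = (1 - A)ᵀ * (1 - A) + γ • ((J * Φ)ᵀ * (J * Φ)) := by
    rw [transpose_sub, transpose_one, hAT, Matrix.sub_mul, Matrix.mul_sub, Matrix.mul_sub, hAA]
    simp only [Matrix.one_mul, Matrix.mul_one]
    abel
  rw [hsq]
  exact (posSemidef_transpose_mul_self (1 - A)).add
    ((posSemidef_transpose_mul_self (J * Φ)).smul hγ)

lemma posSemidef_smul_one_sub_transpose_mul_mul {Φ : Matrix m n ℝ} {J D : Matrix m m ℝ} {c : ℝ}
    (hc : 0 ≤ c) (hD : (c • J - D).PosSemidef) (hJ : (1 - Φᵀ * J * Φ).PosSemidef) :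
    (c • 1 - Φᵀ * D * Φ).PosSemidef := by
  have h : c • 1 - Φᵀ * D * Φ = Φᵀ * (c • J - D) * Φ + c • (1 - Φᵀ * J * Φ) := by
    simp only [Matrix.mul_sub, Matrix.sub_mul, Matrix.mul_smul, Matrix.smul_mul, smul_sub]
    abel
  rw [h]
  exact (hD.transpose_mul_mul_same Φ).add (hJ.smul hc)

lemma trace_mul_le_of_posSemidef {M S : Matrix n n ℝ} {c : ℝ}
    (hM : (c • 1 - M).PosSemidef) (hS : IsIdempotentElem S) (hST : Sᵀ = S) :
    (M * S).trace ≤ c * S.trace := by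
  have h := (hM.transpose_mul_mul_same S).trace_nonneg
  rw [hST, Matrix.mul_sub, Matrix.sub_mul, Matrix.mul_smul, Matrix.mul_one, Matrix.smul_mul,
    hS.eq, trace_sub, trace_smul, smul_eq_mul, trace_mul_comm, ← Matrix.mul_assoc, hS.eq,
    trace_mul_comm] at h
  linarith

end Matrix

section Frobenius

variable {d n : ℕ}

lemma frobSq_nonneg (A : Matrix (Fin d) (Fin n) ℝ) : 0 ≤ frobSq A :=
  (posSemidef_transpose_mul_self A).trace_nonneg

lemma frobSq_sub_mul_mul (Φ : Matrix (Fin d) (Fin n) ℝ)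
    {Q : Matrix (Fin d) (Fin d) ℝ} (hQ : IsIdempotentElem Q) (hQT : Qᵀ = Q)
    {S : Matrix (Fin n) (Fin n) ℝ} (hS : IsIdempotentElem S) (hST : Sᵀ = S) :
    frobSq (Φ - Q * Φ * S) = (Φᵀ * Φ).trace - (Φᵀ * Q * Φ * S).trace := by
  set M := Φᵀ * Q * Φ
  have hQQ : Q * (Q * (Φ * S)) = Q * (Φ * S) := by rw [← Matrix.mul_assoc, hQ.eq]
  have hexp : (Φ - Q * Φ * S)ᵀ * (Φ - Q * Φ * S) = Φᵀ * Φ - (S * M + M * S - S * M * S) := by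
    simp only [M, transpose_sub, transpose_mul, hST, hQT, Matrix.sub_mul, Matrix.mul_sub,
      Matrix.mul_assoc, hQQ]
    abel
  have hcyc : (S * M * S).trace = (M * S).trace := by
    rw [trace_mul_comm, ← Matrix.mul_assoc, hS.eq, trace_mul_comm]
  rw [frobSq, hexp, trace_sub, trace_sub, trace_add, trace_mul_comm S M, hcyc]
  ring

lemma frobSq_sub_mul_mul_eq_add (Φ : Matrix (Fin d) (Fin n) ℝ)
    {Q : Matrix (Fin d) (Fin d) ℝ} (hQ : IsIdempotentElem Q) (hQT : Qᵀ = Q)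
    {S : Matrix (Fin n) (Fin n) ℝ} (hS : IsIdempotentElem S) (hST : Sᵀ = S) :
    frobSq (Φ - Q * Φ * S) = frobSq (Φ - Φ * S) + (Φᵀ * (1 - Q) * Φ * S).trace := by
  have h := frobSq_sub_mul_mul Φ IsIdempotentElem.one transpose_one hS hST
  rw [Matrix.one_mul, Matrix.mul_one] at h
  rw [frobSq_sub_mul_mul Φ hQ hQT hS hST, h]
  simp only [Matrix.mul_sub, Matrix.sub_mul, Matrix.mul_one, trace_sub]
  ring

end Frobenius

section ClusterProj

variable {n k : ℕ}

lemma clusterProj_transpose (g : Fin n → Fin k) : (clusterProj g)ᵀ = clusterProj g := by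
  ext i i'
  by_cases h : g i = g i' <;> simp [clusterProj, h, eq_comm]

lemma isIdempotentElem_clusterProj (g : Fin n → Fin k) : IsIdempotentElem (clusterProj g) := by
  ext i i'
  have hN : (0 : ℝ) < (Finset.univ.filter (fun s => g s = g i)).card := by
    exact_mod_cast Finset.card_pos.2 ⟨i, by simp⟩
  have hterm : ∀ s, clusterProj g i s * clusterProj g s i' = if g s = g i then
      1 / ((Finset.univ.filter (fun t => g t = g i)).card : ℝ) * clusterProj g i i' else 0 := by
    intro s
    by_cases hs : g s = g i
    · simp [clusterProj, hs, eq_comm]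
    · simp [clusterProj, hs, Ne.symm hs]
  rw [mul_apply, Finset.sum_congr rfl fun s _ => hterm s, ← Finset.sum_filter, Finset.sum_const,
    nsmul_eq_mul]
  field_simp

lemma trace_clusterProj {g : Fin n → Fin k} (hg : Function.Surjective g) :
    (clusterProj g).trace = k := by
  have hfiber : ∀ j, ∑ _i ∈ Finset.univ.filter (fun i => g i = j),
      1 / ((Finset.univ.filter (fun s => g s = j)).card : ℝ) = 1 := fun j => by
    obtain ⟨i, rfl⟩ := hg j
    have hN : (0 : ℝ) < (Finset.univ.filter (fun s => g s = g i)).card := by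
      exact_mod_cast Finset.card_pos.2 ⟨i, by simp⟩
    rw [Finset.sum_const, nsmul_eq_mul]
    field_simp
  simp only [trace, diag, clusterProj, if_true]
  rw [← Finset.sum_fiberwise' Finset.univ g
    (fun j => 1 / ((Finset.univ.filter (fun s => g s = j)).card : ℝ)),
    Finset.sum_congr rfl fun j _ => hfiber j]
  simp

end ClusterProj

theorem stmt15_general {d n k : ℕ} (Φ : Matrix (Fin d) (Fin n) ℝ) (γ ε : ℝ)
    (hγ : 0 < γ) (hε : ε ∈ Set.Ioo (0 : ℝ) 1)
    (P : Matrix (Fin d) (Fin d) ℝ)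
    (hP1 : Φ * Φᵀ * P * (Φ * Φᵀ) = Φ * Φᵀ)
    (hP3 : (Φ * Φᵀ * P)ᵀ = Φ * Φᵀ * P)
    (Proj : Matrix (Fin d) (Fin d) ℝ) (hProj : Proj = Φ * Φᵀ * P)
    (ProjM : Matrix (Fin d) (Fin d) ℝ)
    (hProjM1 : ProjM * ProjM = ProjM) (hProjM2 : ProjMᵀ = ProjM)
    -- `J` is the inverse of `ΦΦᵀ + γProj` on the range of `Proj`
    (J : Matrix (Fin d) (Fin d) ℝ)
    (hJ2 : J * (Φ * Φᵀ + γ • Proj) = Proj)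
    (hJ3 : Proj * J * Proj = J)
    -- the `γ`-preserving dictionary condition `Proj - ProjM ⪯ (γ/(1-ε)) J`
    (hdict : ((γ / (1 - ε)) • J - (Proj - ProjM)).PosSemidef)
    (gn : Fin n → Fin k) (hgn : ∀ j : Fin k, ∃ i, gn i = j) :
    sInf {x : ℝ | ∃ g : Fin n → Fin k, (∀ j : Fin k, ∃ i, g i = j) ∧
        x = frobSq (Φ - ProjM * Φ * clusterProj g)}
      ≤ frobSq (Φ - Φ * clusterProj gn) + γ * k / (1 - ε) := by
  have hc : 0 ≤ γ / (1 - ε) := div_nonneg hγ.le (sub_nonneg.2 hε.2.le)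
  have hProjT : Projᵀ = Proj := hProj ▸ hP3
  have hProjIdem : IsIdempotentElem Proj := by
    rw [hProj, IsIdempotentElem, ← Matrix.mul_assoc, hP1]
  have hProjΦ : Proj * Φ = Φ := mul_eq_self_of_mul_mul_transpose_eq (by rw [hProj, hP1])
  obtain ⟨hProjJ, hJProj⟩ := hProjIdem.mul_eq_self_of_mul_mul_eq hJ3
  have hJT : Jᵀ = J := transpose_eq_of_mul_eq_of_mul_eq_self
    (by rw [transpose_add, transpose_mul, transpose_transpose, transpose_smul, hProjT]) hProjT
    hJ2 hJProj
  have hJΦ := posSemidef_one_sub_transpose_mul_mul Φ hγ.le hJT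
    (mul_mul_eq_sub_smul_mul_self hJ2 hProjJ hJProj)
  have hresidual : ((γ / (1 - ε)) • 1 - Φᵀ * (1 - ProjM) * Φ).PosSemidef := by
    have h : Φᵀ * (1 - ProjM) * Φ = Φᵀ * (Proj - ProjM) * Φ := by
      simp only [Matrix.mul_sub, Matrix.sub_mul, Matrix.mul_one, Matrix.mul_assoc, hProjΦ]
    rw [h]
    exact posSemidef_smul_one_sub_transpose_mul_mul hc hdict hJΦ
  have hbound := trace_mul_le_of_posSemidef hresidual (isIdempotentElem_clusterProj gn)
    (clusterProj_transpose gn)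
  rw [trace_clusterProj hgn] at hbound
  calc sInf {x : ℝ | ∃ g : Fin n → Fin k, (∀ j : Fin k, ∃ i, g i = j) ∧
        x = frobSq (Φ - ProjM * Φ * clusterProj g)}
      ≤ frobSq (Φ - ProjM * Φ * clusterProj gn) :=
        csInf_le ⟨0, fun _ ⟨_, _, hx⟩ => hx ▸ frobSq_nonneg _⟩ ⟨gn, hgn, rfl⟩
    _ ≤ frobSq (Φ - Φ * clusterProj gn) + γ * k / (1 - ε) := by
        rw [frobSq_sub_mul_mul_eq_add Φ hProjM1 hProjM2 (isIdempotentElem_clusterProj gn)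
          (clusterProj_transpose gn), mul_div_right_comm]
        linarith

/-- Additive empirical-cost bound: if the dictionary is `γ`-preserving, i.e.
`Proj - ProjM ⪯ (γ/(1-ε))(ΦΦᵀ + γProj)⁻¹` (inverse `J` taken on the range of `Proj`), and `S_n` is the
cluster projection achieving the optimal exact k-means cost `W* = ‖Φ - Φ S_n‖_F²`, then the
optimal cost with centroids constrained to `Range(ProjM)` is at most `W* + γk/(1-ε)`. -/
theorem stmt15 {d n k : ℕ} (Φ : Matrix (Fin d) (Fin n) ℝ) (γ ε : ℝ)
    (hγ : 0 < γ) (hε : ε ∈ Set.Ioo (0 : ℝ) 1)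
    (P : Matrix (Fin d) (Fin d) ℝ)
    (hP1 : Φ * Φᵀ * P * (Φ * Φᵀ) = Φ * Φᵀ)
    (hP2 : P * (Φ * Φᵀ) * P = P)
    (hP3 : (Φ * Φᵀ * P)ᵀ = Φ * Φᵀ * P)
    (hP4 : (P * (Φ * Φᵀ))ᵀ = P * (Φ * Φᵀ))
    (Proj : Matrix (Fin d) (Fin d) ℝ) (hProj : Proj = Φ * Φᵀ * P)
    (ProjM : Matrix (Fin d) (Fin d) ℝ)
    (hProjM1 : ProjM * ProjM = ProjM) (hProjM2 : ProjMᵀ = ProjM) (hProjMProj : Proj * ProjM = ProjM)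
    -- `J` is the inverse of `ΦΦᵀ + γProj` on the range of `Proj`
    (J : Matrix (Fin d) (Fin d) ℝ)
    (hJ1 : (Φ * Φᵀ + γ • Proj) * J = Proj) (hJ2 : J * (Φ * Φᵀ + γ • Proj) = Proj)
    (hJ3 : Proj * J * Proj = J)
    -- the `γ`-preserving dictionary condition `Proj - ProjM ⪯ (γ/(1-ε)) J`
    (hdict : ((γ / (1 - ε)) • J - (Proj - ProjM)).PosSemidef)
    -- `S_n = clusterProj gn` achieves the optimal exact k-means cost
    (gn : Fin n → Fin k) (hgn : ∀ j : Fin k, ∃ i, gn i = j)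
    (hopt : ∀ g : Fin n → Fin k, (∀ j : Fin k, ∃ i, g i = j) →
      frobSq (Φ - Φ * clusterProj gn) ≤ frobSq (Φ - Φ * clusterProj g)) :
    sInf {x : ℝ | ∃ g : Fin n → Fin k, (∀ j : Fin k, ∃ i, g i = j) ∧
        x = frobSq (Φ - ProjM * Φ * clusterProj g)}
      ≤ frobSq (Φ - Φ * clusterProj gn) + γ * k / (1 - ε) :=
  stmt15_general Φ γ ε hγ hε P hP1 hP3 Proj hProj ProjM hProjM1 hProjM2 J hJ2 hJ3 hdict gn hgn
end

section
/- Matrix Bernstein consequence for subsampled covariance: if (1-ε)ΦΦᵀ - εγΠ ⪯ (n/m) Φ_mΦ_mᵀ with Π the orthogonal projection onto Range(Φ) and Range(Φ_m) ⊆ Range(Φ), then Π ⪯ Π_m + (γ/(1-ε)) (ΦΦᵀ + γΠ)⁻¹, where Π_m = Φ_mΦ_mᵀ(Φ_mΦ_mᵀ)⁺ and the inverse is taken on Range(Π). -/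
/-!
Write `S = ΦΦᵀ + γΠ`, so that `J` is the inverse of `S` on the range of `Π`, and let
`q = Π - Π_m`, the projection onto the part of the range of `Φ` missed by the subsample.
Since `Φ_m Φ_mᵀ` vanishes on the range of `q`, conjugating the hypothesis by `q` gives
`q S q ⪯ γ/(1-ε) q`. For a vector `x`, Cauchy–Schwarz for the form `⟨u, v⟩_S = uᵀSv` applied to
`qx` and `Jx` gives `(xᵀqx)² = ⟨qx, Jx⟩_S² ≤ (xᵀqSqx)(xᵀJx) ≤ γ/(1-ε) (xᵀqx)(xᵀJx)`, so
`q ⪯ γ/(1-ε) J`, i.e. `Π ⪯ Π_m + γ/(1-ε) J`.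
-/

open Matrix

variable {ι : Type*} [Fintype ι]

theorem Matrix.PosSemidef.dotProduct_mulVec_mul_self_le {S : Matrix ι ι ℝ} (hS : S.PosSemidef)
    (x y : ι → ℝ) :
    (x ⬝ᵥ S *ᵥ y) * (x ⬝ᵥ S *ᵥ y) ≤ (x ⬝ᵥ S *ᵥ x) * (y ⬝ᵥ S *ᵥ y) := by
  let _ := S.toSeminormedAddCommGroup hS
  let _ := S.toInnerProductSpace hS
  have h_inner (u v : ι → ℝ) : inner ℝ u v = u ⬝ᵥ S *ᵥ v := by
    rw [dotProduct_comm]; rfl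
  simpa only [h_inner] using real_inner_mul_inner_self_le x y

theorem Matrix.dotProduct_star_mul_mul_mulVec (M N L : Matrix ι ι ℝ) (x y : ι → ℝ) :
    x ⬝ᵥ (star M * N * L) *ᵥ y = (M *ᵥ x) ⬝ᵥ N *ᵥ (L *ᵥ y) := by
  rw [star_eq_conjTranspose, conjTranspose_eq_transpose_of_trivial, ← mulVec_mulVec,
    ← mulVec_mulVec, dotProduct_transpose_mulVec, dotProduct_comm]

theorem isStarProjection_mul_of_mul_mul_eq {R : Type*} [Semigroup R] [Star R] {a p : R}
    (h : a * p * a = a) (hap : IsSelfAdjoint (a * p)) : IsStarProjection (a * p) where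
  isIdempotentElem := by rw [IsIdempotentElem, ← mul_assoc, h]
  isSelfAdjoint := hap

section PseudoInverse

variable {R : Type*} [Semigroup R] [StarMul R] {S J p : R}

theorem star_mul_mul_eq_star_of_mul_eq (hp : IsSelfAdjoint p) (hSJ : S * J = p)
    (hpJ : p * J = J) : star J * S * J = star J := by
  rw [mul_assoc, hSJ, ← hp.star_eq, ← star_mul, hpJ]

theorem isSelfAdjoint_of_mul_eq (hS : IsSelfAdjoint S) (hp : IsSelfAdjoint p)
    (hSJ : S * J = p) (hpJ : p * J = J) : IsSelfAdjoint J := by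
  have h := hS.conjugate' J
  rw [star_mul_mul_eq_star_of_mul_eq hp hSJ hpJ] at h
  exact IsSelfAdjoint.star_iff.mp h

theorem IsSelfAdjoint.mul_eq_self_of_mul_eq (hp : IsSelfAdjoint p) {q : R}
    (hq : IsSelfAdjoint q) (h : p * q = q) : q * p = q := by
  simpa only [star_mul, hq.star_eq, hp.star_eq] using congrArg star h

end PseudoInverse

theorem Matrix.mul_eq_self_of_mul_mul_conjTranspose {κ R : Type*} [Fintype κ] [DecidableEq ι]
    [Ring R] [PartialOrder R] [StarRing R] [StarOrderedRing R] [NoZeroDivisors R]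
    {p : Matrix ι ι R} {Φ : Matrix ι κ R} (h : p * (Φ * Φᴴ) = Φ * Φᴴ) : p * Φ = Φ := by
  have hΦ : Φ - p * Φ = (1 - p) * Φ := by rw [Matrix.sub_mul, Matrix.one_mul]
  have : (Φ - p * Φ) * (Φ - p * Φ)ᴴ = 0 := by
    rw [hΦ, conjTranspose_mul, ← Matrix.mul_assoc, Matrix.mul_assoc _ Φ, Matrix.sub_mul,
      Matrix.one_mul, h, sub_self, Matrix.zero_mul]
  exact (sub_eq_zero.mp (self_mul_conjTranspose_eq_zero.mp this)).symm

theorem Matrix.mul_eq_self_of_forall_exists_col_eq {κ μ R : Type*} [Fintype κ] [Semiring R]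
    {p : Matrix ι ι R} {Φ : Matrix ι κ R} {Ψ : Matrix ι μ R} (hΦ : p * Φ = Φ)
    (hcols : ∀ j, ∃ i, ∀ r, Ψ r j = Φ r i) : p * Ψ = Ψ := by
  choose f hf using hcols
  have hΨ : Ψ = Φ.submatrix id f := by ext r j; exact hf j r
  rw [hΨ]
  ext r j
  exact congrFun₂ hΦ r (f j)

section LoewnerOrder

open scoped MatrixOrder

theorem Matrix.mul_mul_le_smul_of_le [DecidableEq ι] {A B p q : Matrix ι ι ℝ} {γ ε ν : ℝ}
    (hε : ε < 1) (hp : IsSelfAdjoint p) (hq : IsStarProjection q) (hpq : p * q = q)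
    (hqB : q * B = 0)
    (h : (1 - ε) • A - (ε * γ) • p ≤ ν • B) :
    q * (A + γ • p) * q ≤ (γ / (1 - ε)) • q := by
  have hqp : q * p = q := hp.mul_eq_self_of_mul_eq hq.isSelfAdjoint hpq
  have hconj := star_left_conjugate_le_conjugate h q
  rw [hq.isSelfAdjoint.star_eq, mul_smul_comm, smul_mul_assoc, hqB, zero_mul, smul_zero,
    mul_sub, sub_mul, mul_smul_comm, smul_mul_assoc, mul_smul_comm, smul_mul_assoc, hqp,
    hq.isIdempotentElem.eq] at hconj
  rw [Matrix.le_iff] at hconj ⊢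
  have h1ε : 0 < 1 - ε := sub_pos.mpr hε
  convert hconj.smul (inv_nonneg.mpr h1ε.le) using 1
  rw [mul_add, add_mul, mul_smul_comm, smul_mul_assoc, hqp, hq.isIdempotentElem.eq]
  match_scalars
  · field_simp
    ring
  · field_simp

theorem Matrix.le_smul_of_mul_mul_le {S J p q : Matrix ι ι ℝ} {c : ℝ} (hS : S.PosSemidef)
    (hSJ : S * J = p) (hp : IsSelfAdjoint p) (hpJ : p * J = J) (hq : IsStarProjection q)
    (hpq : p * q = q) (hc : 0 ≤ c) (h : q * S * q ≤ c • q) : q ≤ c • J := by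
  have hJ : IsSelfAdjoint J := isSelfAdjoint_of_mul_eq hS.isHermitian.isSelfAdjoint hp hSJ hpJ
  have hJSJ : star J * S * J = J := by
    rw [star_mul_mul_eq_star_of_mul_eq hp hSJ hpJ, hJ.star_eq]
  have hqp : q * p = q := hp.mul_eq_self_of_mul_eq hq.isSelfAdjoint hpq
  rw [Matrix.le_iff]
  have hherm : (c • J - q).IsHermitian :=
    (((IsSelfAdjoint.all c).smul hJ).sub hq.isSelfAdjoint).isHermitian
  refine .of_dotProduct_mulVec_nonneg hherm fun x => ?_
  rw [star_trivial, sub_mulVec, dotProduct_sub, smul_mulVec, dotProduct_smul, smul_eq_mul,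
    sub_nonneg]
  set t := x ⬝ᵥ q *ᵥ x
  set j := x ⬝ᵥ J *ᵥ x
  have hcross : (q *ᵥ x) ⬝ᵥ S *ᵥ (J *ᵥ x) = t := by
    rw [← dotProduct_star_mul_mul_mulVec, hq.isSelfAdjoint.star_eq, mul_assoc, hSJ, hqp]
  have hJx : (J *ᵥ x) ⬝ᵥ S *ᵥ (J *ᵥ x) = j := by
    rw [← dotProduct_star_mul_mul_mulVec, hJSJ]
  have hqx : (q *ᵥ x) ⬝ᵥ S *ᵥ (q *ᵥ x) ≤ c * t := by
    have := (Matrix.le_iff.mp h).dotProduct_mulVec_nonneg x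
    rw [star_trivial, sub_mulVec, dotProduct_sub, smul_mulVec, dotProduct_smul, smul_eq_mul,
      sub_nonneg] at this
    rwa [← dotProduct_star_mul_mul_mulVec, hq.isSelfAdjoint.star_eq]
  have ht : 0 ≤ t := by
    simpa using (Matrix.nonneg_iff_posSemidef.mp hq.nonneg).dotProduct_mulVec_nonneg x
  have hj : 0 ≤ j := by
    simpa only [star_trivial, hJx] using hS.dotProduct_mulVec_nonneg (J *ᵥ x)
  have hCS := hS.dotProduct_mulVec_mul_self_le (q *ᵥ x) (J *ᵥ x)
  rw [hcross, hJx] at hCS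
  nlinarith [mul_le_mul_of_nonneg_right hqx hj, mul_nonneg hc hj]

theorem Matrix.le_add_smul_of_le [DecidableEq ι] {A B p pm J : Matrix ι ι ℝ} {γ ε ν : ℝ}
    (hγ : 0 ≤ γ) (hε : ε < 1) (hA : A.PosSemidef) (hp : IsStarProjection p)
    (hpm : IsStarProjection pm) (hppm : p * pm = pm) (hpB : p * B = B) (hpmB : pm * B = B)
    (hJ : (A + γ • p) * J = p) (hpJ : p * J = J)
    (h : (1 - ε) • A - (ε * γ) • p ≤ ν • B) :
    p ≤ pm + (γ / (1 - ε)) • J := by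
  have hq : IsStarProjection (p - pm) := hpm.sub_of_mul_eq_right hp hppm
  have hpq : p * (p - pm) = p - pm := by rw [mul_sub, hp.isIdempotentElem.eq, hppm]
  have hqB : (p - pm) * B = 0 := by rw [sub_mul, hpB, hpmB, sub_self]
  have hS : (A + γ • p).PosSemidef :=
    hA.add ((Matrix.nonneg_iff_posSemidef.mp hp.nonneg).smul hγ)
  have hc : 0 ≤ γ / (1 - ε) := div_nonneg hγ (sub_nonneg.mpr hε.le)
  calc p = pm + (p - pm) := (add_sub_cancel pm p).symm
    _ ≤ pm + (γ / (1 - ε)) • J := add_le_add le_rfl <| le_smul_of_mul_mul_le hS hJ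
        hp.isSelfAdjoint hpJ hq hpq hc (mul_mul_le_smul_of_le hε hp.isSelfAdjoint hq hpq hqB h)

end LoewnerOrder

theorem stmt17_general {d n m : ℕ}
    (Φ : Matrix (Fin d) (Fin n) ℝ) (Φm : Matrix (Fin d) (Fin m) ℝ)
    (hcols : ∀ j : Fin m, ∃ i : Fin n, ∀ r, Φm r j = Φ r i)
    (γ ε : ℝ) (hγ : 0 < γ) (hε : ε ∈ Set.Ioo (0 : ℝ) 1)
    (P : Matrix (Fin d) (Fin d) ℝ)
    (hP1 : Φ * Φᵀ * P * (Φ * Φᵀ) = Φ * Φᵀ)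
    (hP3 : (Φ * Φᵀ * P)ᵀ = Φ * Φᵀ * P)
    (Proj : Matrix (Fin d) (Fin d) ℝ) (hProj : Proj = Φ * Φᵀ * P)
    (Pm : Matrix (Fin d) (Fin d) ℝ)
    (hPm1 : Φm * Φmᵀ * Pm * (Φm * Φmᵀ) = Φm * Φmᵀ)
    (hPm3 : (Φm * Φmᵀ * Pm)ᵀ = Φm * Φmᵀ * Pm)
    (ProjM : Matrix (Fin d) (Fin d) ℝ) (hProjM : ProjM = Φm * Φmᵀ * Pm)
    (J : Matrix (Fin d) (Fin d) ℝ)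
    (hJ1 : (Φ * Φᵀ + γ • Proj) * J = Proj)
    (hJ3 : Proj * J * Proj = J)
    (hconc : (((n : ℝ) / (m : ℝ)) • (Φm * Φmᵀ)
      - ((1 - ε) • (Φ * Φᵀ) - (ε * γ) • Proj)).PosSemidef) :
    (ProjM + (γ / (1 - ε)) • J - Proj).PosSemidef := by
  have hP : IsStarProjection Proj :=
    hProj ▸ isStarProjection_mul_of_mul_mul_eq hP1
      (isHermitian_iff_isSymm.mpr hP3).isSelfAdjoint
  have hPm : IsStarProjection ProjM :=
    hProjM ▸ isStarProjection_mul_of_mul_mul_eq hPm1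
      (isHermitian_iff_isSymm.mpr hPm3).isSelfAdjoint
  have hPΦ : Proj * Φ = Φ := mul_eq_self_of_mul_mul_conjTranspose <| by
    rw [conjTranspose_eq_transpose_of_trivial, hProj, hP1]
  have hPB : Proj * (Φm * Φmᵀ) = Φm * Φmᵀ := by
    rw [← Matrix.mul_assoc, mul_eq_self_of_forall_exists_col_eq hPΦ hcols]
  have hPJ : Proj * J = J := by
    rw [← hJ3, ← mul_assoc, ← mul_assoc, hP.isIdempotentElem.eq]
  have hA : (Φ * Φᵀ).PosSemidef := by
    simpa only [conjTranspose_eq_transpose_of_trivial] using posSemidef_self_mul_conjTranspose Φ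
  refine Matrix.le_iff.mp (le_add_smul_of_le hγ.le hε.2 hA hP hPm ?_ hPB ?_ hJ1 hPJ hconc)
  · rw [hProjM, ← mul_assoc, hPB]
  · rw [hProjM]; exact hPm1

/-- Deterministic core of Lemma 1: if `(1-ε)ΦΦᵀ - εγProj ⪯ (n/m) Φ_mΦ_mᵀ`, where the columns of
`Φ_m` are a subset of the columns of `Φ` and `Proj` is the orthogonal projection onto the range
of `Φ`, then `Proj ⪯ Proj_m + (γ/(1-ε)) (ΦΦᵀ + γProj)⁻¹`, with `Proj_m = Φ_mΦ_mᵀ(Φ_mΦ_mᵀ)⁺` and the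
inverse `J` taken on the range of `Proj`. -/
theorem stmt17 {d n m : ℕ} (hm : 0 < m)
    (Φ : Matrix (Fin d) (Fin n) ℝ) (Φm : Matrix (Fin d) (Fin m) ℝ)
    (hcols : ∀ j : Fin m, ∃ i : Fin n, ∀ r, Φm r j = Φ r i)
    (γ ε : ℝ) (hγ : 0 < γ) (hε : ε ∈ Set.Ioo (0 : ℝ) 1)
    (P : Matrix (Fin d) (Fin d) ℝ)
    (hP1 : Φ * Φᵀ * P * (Φ * Φᵀ) = Φ * Φᵀ)
    (hP2 : P * (Φ * Φᵀ) * P = P)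
    (hP3 : (Φ * Φᵀ * P)ᵀ = Φ * Φᵀ * P)
    (hP4 : (P * (Φ * Φᵀ))ᵀ = P * (Φ * Φᵀ))
    (Proj : Matrix (Fin d) (Fin d) ℝ) (hProj : Proj = Φ * Φᵀ * P)
    (Pm : Matrix (Fin d) (Fin d) ℝ)
    (hPm1 : Φm * Φmᵀ * Pm * (Φm * Φmᵀ) = Φm * Φmᵀ)
    (hPm2 : Pm * (Φm * Φmᵀ) * Pm = Pm)
    (hPm3 : (Φm * Φmᵀ * Pm)ᵀ = Φm * Φmᵀ * Pm)
    (hPm4 : (Pm * (Φm * Φmᵀ))ᵀ = Pm * (Φm * Φmᵀ))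
    (ProjM : Matrix (Fin d) (Fin d) ℝ) (hProjM : ProjM = Φm * Φmᵀ * Pm)
    (J : Matrix (Fin d) (Fin d) ℝ)
    (hJ1 : (Φ * Φᵀ + γ • Proj) * J = Proj) (hJ2 : J * (Φ * Φᵀ + γ • Proj) = Proj)
    (hJ3 : Proj * J * Proj = J)
    (hconc : (((n : ℝ) / (m : ℝ)) • (Φm * Φmᵀ)
      - ((1 - ε) • (Φ * Φᵀ) - (ε * γ) • Proj)).PosSemidef) :
    (ProjM + (γ / (1 - ε)) • J - Proj).PosSemidef :=
  stmt17_general Φ Φm hcols γ ε hγ hε P hP1 hP3 Proj hProj Pm hPm1 hPm3 ProjM hProjM J hJ1 hJ3 hconc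
end
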